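/- Let V be a finite-dimensional complex vector space, N_V a norm on V, and F a filtration of V. For f ∈ V, f ≠ 0, let w_F(f) := sup{λ ∈ ℝ : f ∈ F^λ V} be the weight of f with respect to F. Then lim_{t→∞} (1/t)·log ‖f‖^t_{V,F} = −w_F(f), where N^t_{V,F} = ‖·‖^t_{V,F} is the ray of norms associated with N_V and F. Equivalently, the ray N^t_{V,F} interpolates, as t → ∞, towards the non-Archimedean norm χ_F(f) = exp(−w_F(f)) associated with F. -/

import Mathlib

open scoped BigOperators

/-- A norm on a complex vector space, given as a function with the usual axioms. -/
def IsNorm {V : Type*} [AddCommGroup V] [Module ℂ V] (N : V → ℝ) : Prop :=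
  (∀ v, 0 ≤ N v) ∧ (∀ v, N v = 0 ↔ v = 0) ∧
  (∀ (c : ℂ) (v : V), N (c • v) = ‖c‖ * N v) ∧
  (∀ v w, N (v + w) ≤ N v + N w)

/-- A (decreasing, left-continuous, exhaustive, bounded) filtration of a complex
vector space by subspaces. -/
def IsVecFiltration {V : Type*} [AddCommGroup V] [Module ℂ V]
    (F : ℝ → Submodule ℂ V) : Prop :=
  (∀ ⦃s t : ℝ⦄, s < t → F t ≤ F s) ∧
  (∀ t : ℝ, ∃ ε₀ > (0:ℝ), ∀ ε : ℝ, 0 < ε → ε < ε₀ → F (t - ε) = F t) ∧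
  (∃ t₀ : ℝ, ∀ t ≤ t₀, F t = ⊤) ∧
  (∃ t₁ : ℝ, ∀ t : ℝ, t₁ ≤ t → F t = ⊥)

/-- The ray of norms associated with a norm `N` and a filtration `F`. -/
noncomputable def rayNorm {V : Type*} [AddCommGroup V] [Module ℂ V]
    (N : V → ℝ) (F : ℝ → Submodule ℂ V) (t : ℝ) (f : V) : ℝ :=
  sInf {c : ℝ | ∃ (n : ℕ) (g : Fin n → V) (μ : Fin n → ℝ),
    (∀ i, g i ∈ F (μ i)) ∧ f = ∑ i, g i ∧
    c = ∑ i, Real.exp (-(t * μ i)) * N (g i)}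

/-- The weight of a nonzero vector with respect to a filtration:
`w_F(f) = sup{λ : f ∈ F^λ V}`. -/
noncomputable def filtWeight {V : Type*} [AddCommGroup V] [Module ℂ V]
    (F : ℝ → Submodule ℂ V) (f : V) : ℝ :=
  sSup {l : ℝ | f ∈ F l}

/-!
Write `w = w_F(f)`. Left-continuity puts `f` in `F^w`, and the trivial decomposition gives
`‖f‖^t ≤ e^{-tw} N(f)`. Conversely, by finite dimensionality the subspaces `F^μ`, `μ > w`,
all lie in one of them, `W = F^{μ₀}`, which does not contain `f`. In any decomposition of `f`
the pieces of weight `> w` lie in `W`, so the pieces of weight `≤ w`, each scaled by at least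
`e^{-tw}`, add up to `f` modulo `W`; their norms therefore sum to at least the distance `c > 0`
from `f` to `W`. Hence `c e^{-tw} ≤ ‖f‖^t ≤ N(f) e^{-tw}` for `t ≥ 0`, and taking `(1/t) log`
gives the limit `-w`.
-/

open Filter Topology Real

section

variable {V : Type*} [AddCommGroup V] [Module ℂ V]

namespace IsNorm

variable {N : V → ℝ} (hN : IsNorm N)
include hN

theorem nonneg (v : V) : 0 ≤ N v := hN.1 v

theorem map_zero : N 0 = 0 := (hN.2.1 0).2 rfl

theorem pos {v : V} (hv : v ≠ 0) : 0 < N v :=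
  (hN.nonneg v).lt_of_ne fun h => hv ((hN.2.1 v).1 h.symm)

theorem map_sum_le {ι : Type*} (s : Finset ι) (g : ι → V) :
    N (∑ i ∈ s, g i) ≤ ∑ i ∈ s, N (g i) :=
  Finset.le_sum_of_subadditive N hN.map_zero.le hN.2.2.2 s g

theorem exists_pos_le_sub_of_notMem {W : Submodule ℂ V} [FiniteDimensional ℂ W] {f : V}
    (hf : f ∉ W) :
    ∃ c > 0, ∀ b ∈ W, c ≤ N (f - b) := by
  obtain ⟨_, hN_eq_zero, hN_smul, hN_add⟩ := hN
  let _ : NormedAddCommGroup V := AddGroupNorm.toNormedAddCommGroup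
    { toFun := N
      map_zero' := (hN_eq_zero 0).2 rfl
      add_le' := hN_add
      neg' := fun v => by simpa using hN_smul (-1) v
      eq_zero_of_map_eq_zero' := fun v => (hN_eq_zero v).1 }
  let _ : NormedSpace ℂ V := ⟨fun c v => (hN_smul c v).le⟩
  refine ⟨Metric.infDist f W, ?_, fun b hb => ?_⟩
  · exact (W.closed_of_finiteDimensional.notMem_iff_infDist_pos ⟨0, W.zero_mem⟩).1 hf
  · exact (Metric.infDist_le_dist_of_mem hb).trans_eq (dist_eq_norm f b)

end IsNorm

theorem Antitone.exists_gt_forall_gt_le {ι α : Type*} [LinearOrder ι] [NoMaxOrder ι]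
    [PartialOrder α] [WellFoundedGT α] {F : ι → α} (hF : Antitone F) (w : ι) :
    ∃ μ₀, w < μ₀ ∧ ∀ μ, w < μ → F μ ≤ F μ₀ := by
  obtain ⟨w', hw'⟩ := exists_gt w
  obtain ⟨_, ⟨μ₀, hμ₀, rfl⟩, hmax⟩ :=
    wellFounded_gt.has_min (F '' Set.Ioi w) ⟨F w', w', hw', rfl⟩
  refine ⟨μ₀, hμ₀, fun μ hμ => ?_⟩
  rcases le_total μ₀ μ with h | h
  · exact hF h
  · exact ((hF h).eq_of_not_lt (hmax _ ⟨μ, hμ, rfl⟩)).ge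

namespace IsVecFiltration

variable {F : ℝ → Submodule ℂ V} (hF : IsVecFiltration F)
include hF

theorem antitone : Antitone F := fun _ _ h =>
  h.eq_or_lt.elim (fun h => h ▸ le_rfl) (fun h => hF.1 h)

theorem nonempty_setOf_mem (f : V) : {l : ℝ | f ∈ F l}.Nonempty := by
  obtain ⟨t₀, ht₀⟩ := hF.2.2.1
  exact ⟨t₀, by simp [ht₀ t₀ le_rfl]⟩

theorem bddAbove_setOf_mem {f : V} (hf : f ≠ 0) : BddAbove {l : ℝ | f ∈ F l} := by
  obtain ⟨t₁, ht₁⟩ := hF.2.2.2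
  refine ⟨t₁, fun l hl => le_of_not_gt fun hlt => hf ?_⟩
  simpa [ht₁ l hlt.le] using hl

theorem notMem_of_filtWeight_lt {f : V} (hf : f ≠ 0) {μ : ℝ} (hμ : filtWeight F f < μ) :
    f ∉ F μ := fun hfμ => hμ.not_ge (le_csSup (hF.bddAbove_setOf_mem hf) hfμ)

theorem mem_filtWeight (f : V) : f ∈ F (filtWeight F f) := by
  obtain ⟨ε₀, hε₀, hF_eq⟩ := hF.2.1 (filtWeight F f)
  obtain ⟨l, hl, hlt⟩ := exists_lt_of_lt_csSup (hF.nonempty_setOf_mem f)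
    (show filtWeight F f - ε₀ / 2 < filtWeight F f by linarith)
  rw [← hF_eq (ε₀ / 2) (by linarith) (by linarith)]
  exact hF.antitone hlt.le hl

end IsVecFiltration

variable {N : V → ℝ} {F : ℝ → Submodule ℂ V} {f : V}

theorem rayNorm_le_of_mem (hN : ∀ v, 0 ≤ N v) {μ : ℝ} (hf : f ∈ F μ) (t : ℝ) :
    rayNorm N F t f ≤ exp (-(t * μ)) * N f := by
  refine csInf_le ⟨0, ?_⟩ ⟨1, fun _ => f, fun _ => μ, fun _ => hf, by simp, by simp⟩
  rintro _ ⟨n, g, μ, -, -, rfl⟩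
  exact Finset.sum_nonneg fun i _ => mul_nonneg (exp_pos _).le (hN _)

theorem le_rayNorm (hN : IsNorm N) {μ : ℝ} (hf : f ∈ F μ) {W : Submodule ℂ V} {w c t : ℝ}
    (hW : ∀ μ, w < μ → F μ ≤ W) (hc : ∀ b ∈ W, c ≤ N (f - b)) (ht : 0 ≤ t) :
    exp (-(t * w)) * c ≤ rayNorm N F t f := by
  classical
  refine le_csInf ⟨_, 1, fun _ => f, fun _ => μ, fun _ => hf, by simp, rfl⟩ ?_
  rintro _ ⟨n, g, μ, hg, rfl, rfl⟩
  set low := Finset.univ.filter fun i => μ i ≤ w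
  have h_high : ∑ i ∈ Finset.univ.filter (fun i => ¬μ i ≤ w), g i ∈ W :=
    W.sum_mem fun i hi => hW (μ i) (not_le.1 (Finset.mem_filter.1 hi).2) (hg i)
  have h_low : c ≤ N (∑ i ∈ low, g i) := by
    simpa [← Finset.sum_filter_add_sum_filter_not Finset.univ (fun i => μ i ≤ w) g]
      using hc _ h_high
  calc exp (-(t * w)) * c
      ≤ exp (-(t * w)) * ∑ i ∈ low, N (g i) :=
        mul_le_mul_of_nonneg_left (h_low.trans (hN.map_sum_le _ _)) (exp_pos _).le
    _ = ∑ i ∈ low, exp (-(t * w)) * N (g i) := Finset.mul_sum _ _ _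
    _ ≤ ∑ i ∈ low, exp (-(t * μ i)) * N (g i) := by
        refine Finset.sum_le_sum fun i hi => mul_le_mul_of_nonneg_right ?_ (hN.nonneg _)
        have hμi := (Finset.mem_filter.1 hi).2
        exact exp_le_exp.2 (neg_le_neg (mul_le_mul_of_nonneg_left hμi ht))
    _ ≤ ∑ i, exp (-(t * μ i)) * N (g i) :=
        Finset.sum_le_sum_of_subset_of_nonneg (Finset.filter_subset _ _)
          fun i _ _ => mul_nonneg (exp_pos _).le (hN.nonneg _)

theorem exists_pos_exp_mul_le_rayNorm [FiniteDimensional ℂ V] (hN : IsNorm N)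
    (hF : IsVecFiltration F) (hf : f ≠ 0) :
    ∃ c > 0, ∀ t, 0 ≤ t → exp (-(t * filtWeight F f)) * c ≤ rayNorm N F t f := by
  obtain ⟨μ₀, hμ₀, hW⟩ := hF.antitone.exists_gt_forall_gt_le (filtWeight F f)
  obtain ⟨c, hc, hc_le⟩ := hN.exists_pos_le_sub_of_notMem (hF.notMem_of_filtWeight_lt hf hμ₀)
  exact ⟨c, hc, fun t ht => le_rayNorm hN (hF.mem_filtWeight f) hW hc_le ht⟩

end

theorem tendsto_inv_mul_log_of_exp_bounds {φ : ℝ → ℝ} {a b w : ℝ} (ha : 0 < a) (hb : 0 < b)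
    (h : ∀ᶠ t in atTop, exp (-(t * w)) * a ≤ φ t ∧ φ t ≤ exp (-(t * w)) * b) :
    Tendsto (fun t => 1 / t * log (φ t)) atTop (𝓝 (-w)) := by
  have h_lim : ∀ d : ℝ, Tendsto (fun t => d / t - w) atTop (𝓝 (-w)) := fun d => by
    simpa using (tendsto_const_nhds.div_atTop tendsto_id).sub_const w
  have h_log : ∀ d > 0, ∀ t > 0, 1 / t * log (exp (-(t * w)) * d) = log d / t - w :=
    fun d hd t ht => by
      rw [log_mul (exp_pos _).ne' hd.ne', log_exp]
      field_simp
      ring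
  refine tendsto_of_tendsto_of_tendsto_of_le_of_le' (h_lim (log a)) (h_lim (log b)) ?_ ?_
  · filter_upwards [h, eventually_gt_atTop 0] with t ht htpos
    rw [← h_log a ha t htpos]
    exact mul_le_mul_of_nonneg_left (log_le_log (by positivity) ht.1) (by positivity)
  · filter_upwards [h, eventually_gt_atTop 0] with t ht htpos
    rw [← h_log b hb t htpos]
    exact mul_le_mul_of_nonneg_left (log_le_log ((by positivity : (0:ℝ) < _).trans_le ht.1) ht.2)
      (by positivity)

/-- The ray of norms interpolates towards the non-Archimedean norm associated with the
filtration: for every `f ≠ 0`, `lim_{t→∞} (1/t)·log ‖f‖^t_{V,F} = −w_F(f)`. -/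
theorem rayNorm_tendsto_nonArchimedean
    {V : Type*} [AddCommGroup V] [Module ℂ V] [FiniteDimensional ℂ V]
    (N : V → ℝ) (hN : IsNorm N) (F : ℝ → Submodule ℂ V) (hF : IsVecFiltration F)
    (f : V) (hf : f ≠ 0) :
    Filter.Tendsto (fun t : ℝ => (1 / t) * Real.log (rayNorm N F t f))
      Filter.atTop (nhds (-(filtWeight F f))) := by
  obtain ⟨c, hc, h_lower⟩ := exists_pos_exp_mul_le_rayNorm hN hF hf
  refine tendsto_inv_mul_log_of_exp_bounds hc (hN.pos hf) ?_
  filter_upwards [eventually_ge_atTop 0] with t ht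
  exact ⟨h_lower t ht, rayNorm_le_of_mem hN.nonneg (hF.mem_filtWeight f) t⟩
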